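/- arXiv:1808.08740 — 4 statements merged into one kernel-verified Lean document; each statement's English description precedes it below -/
import Mathlib

section
/- Let S be a half-odd-integer and V_j = exp(-iπ S_j) for j = 1,2,3. Then V_j V_k = -V_k V_j whenever j ≠ k. -/
/-!
The raising operator `S₂ + i S₃` shifts eigenvalues of `S₁` up by one, and positivity of
`(S₂ ∓ i S₃)(S₂ ± i S₃) = S(S+1) - S₁² ∓ S₁` gives `|μ| ≤ S` for every eigenvalue `μ`. Climbing
from `μ` therefore ends at an eigenvector killed by the raising operator, whose eigenvalue must
be `S`; so the spectrum of `S₁` lies in `S - ℕ` and, `2S` being odd, `exp (2πi S₁) = -1`.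
Since `S₂ ± i S₃` shift `S₁` by `±1` and `e^{∓iπ} = -1`, `V₁` anticommutes with both, hence
with `S₂`; conjugating by `V₁` then gives `V₁ V₂ V₁⁻¹ = exp (iπ S₂) = exp (2πi S₂) V₂ = -V₂`.
-/

open NormedSpace Matrix
open scoped Real ComplexOrder

variable {n : Type*} [Fintype n]

namespace Matrix

theorem nonneg_of_conjTranspose_mul_self_mulVec_eq_smul {N : Matrix n n ℂ} {v : n → ℂ} {r : ℝ}
    (hv : v ≠ 0) (h : (Nᴴ * N) *ᵥ v = (r : ℂ) • v) : 0 ≤ r := by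
  have hnonneg := (posSemidef_conjTranspose_mul_self N).dotProduct_mulVec_nonneg v
  rw [h, dotProduct_smul, smul_eq_mul] at hnonneg
  by_contra! hr
  exact (mul_neg_of_neg_of_pos (by exact_mod_cast hr) (dotProduct_star_self_pos_iff.mpr hv)).not_ge
    hnonneg

variable [DecidableEq n]

theorem semiconjBy_exp {𝕜 : Type*} [RCLike 𝕜] {x a b : Matrix n n 𝕜} (h : SemiconjBy x a b) :
    SemiconjBy x (exp a) (exp b) :=
  open scoped Norms.Operator in h.exp_right

theorem exp_smul_one (z : ℂ) : exp (z • (1 : Matrix n n ℂ)) = Complex.exp z • 1 := by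
  rw [smul_one_eq_diagonal, smul_one_eq_diagonal, exp_diagonal, Pi.exp_def, Complex.exp_eq_exp_ℂ]

theorem exp_smul_mul_of_mul_eq_mul_add_smul_one {A L : Matrix n n ℂ} {a : ℂ}
    (h : A * L = L * (A + a • 1)) (c : ℂ) :
    exp (c • A) * L = Complex.exp (c * a) • (L * exp (c • A)) := by
  have hL : SemiconjBy L (c • (A + a • 1)) (c • A) := by
    rw [SemiconjBy, mul_smul_comm, ← h, smul_mul_assoc]
  have hcomm : Commute (c • A) ((c * a) • (1 : Matrix n n ℂ)) :=
    ((Commute.one_right A).smul_right _).smul_left _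
  rw [← (semiconjBy_exp hL).eq, smul_add, smul_smul, exp_add_of_commute _ _ hcomm, exp_smul_one,
    mul_smul_comm, mul_one, mul_smul_comm]

theorem IsHermitian.exp_smul_eq_smul_one {A : Matrix n n ℂ} (hA : A.IsHermitian) {c z : ℂ}
    (h : ∀ i, Complex.exp (c * hA.eigenvalues i) = z) : NormedSpace.exp (c • A) = z • 1 := by
  have hdiag : c • diagonal (RCLike.ofReal ∘ hA.eigenvalues) =
      diagonal fun i => c * hA.eigenvalues i := by
    rw [← diagonal_smul]; rfl
  have hexp : NormedSpace.exp (diagonal fun i => c * hA.eigenvalues i) = z • 1 := by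
    simp only [exp_diagonal, Pi.exp_def, ← Complex.exp_eq_exp_ℂ, h, smul_one_eq_diagonal]
  have hUU := hA.eigenvectorUnitary.2.1
  have hUU' := hA.eigenvectorUnitary.2.2
  conv_lhs => rw [hA.spectral_theorem, Unitary.conjStarAlgAut_apply]
  generalize (hA.eigenvectorUnitary : Matrix n n ℂ) = U at hUU hUU' ⊢
  have hU : IsUnit U := ⟨⟨U, star U, hUU', hUU⟩, rfl⟩
  rw [← smul_mul_assoc, ← mul_smul_comm, hdiag, ← inv_eq_left_inv hUU, exp_conj _ _ hU, hexp,
    mul_smul_comm, mul_one, smul_mul_assoc, mul_nonsing_inv _ ((isUnit_iff_isUnit_det _).mp hU)]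

theorem smul_one_sub_sq_add_smul_mulVec {A : Matrix n n ℂ} {v : n → ℂ} {μ : ℂ}
    (hAv : A *ᵥ v = μ • v) (a b : ℂ) : (a • 1 - A ^ 2 + b • A) *ᵥ v = (a - μ ^ 2 + b * μ) • v := by
  rw [add_mulVec, sub_mulVec, smul_mulVec, one_mulVec, sq, ← mulVec_mulVec, hAv, mulVec_smul, hAv,
    smul_mulVec, hAv]
  module

end Matrix

variable [DecidableEq n]

structure IsSpinTriple (s : ℝ) (A B C : Matrix n n ℂ) : Prop where
  isHermitian₁ : A.IsHermitian
  isHermitian₂ : B.IsHermitian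
  isHermitian₃ : C.IsHermitian
  comm₁₂ : A * B - B * A = Complex.I • C
  comm₂₃ : B * C - C * B = Complex.I • A
  comm₃₁ : C * A - A * C = Complex.I • B
  casimir : A ^ 2 + B ^ 2 + C ^ 2 = ((s * (s + 1) : ℝ) : ℂ) • 1

namespace IsSpinTriple

variable {s : ℝ} {A B C : Matrix n n ℂ} (h : IsSpinTriple s A B C)
include h

theorem rotate : IsSpinTriple s B C A where
  isHermitian₁ := h.isHermitian₂
  isHermitian₂ := h.isHermitian₃
  isHermitian₃ := h.isHermitian₁
  comm₁₂ := h.comm₂₃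
  comm₂₃ := h.comm₃₁
  comm₃₁ := h.comm₁₂
  casimir := by rw [← h.casimir]; abel

theorem mul_raise : A * (B + Complex.I • C) = (B + Complex.I • C) * (A + 1) := by
  simp only [mul_add, add_mul, mul_smul_comm, smul_mul_assoc, mul_one]
  linear_combination (norm := skip) h.comm₁₂ - Complex.I • h.comm₃₁
  match_scalars <;> grind [Complex.I_sq]

theorem mul_lower : A * (B - Complex.I • C) = (B - Complex.I • C) * (A - 1) := by
  simp only [mul_sub, sub_mul, mul_smul_comm, smul_mul_assoc, mul_one]
  linear_combination (norm := skip) h.comm₁₂ + Complex.I • h.comm₃₁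
  match_scalars <;> grind [Complex.I_sq]

theorem conjTranspose_raise : (B + Complex.I • C)ᴴ = B - Complex.I • C := by
  rw [conjTranspose_add, conjTranspose_smul, h.isHermitian₂.eq, h.isHermitian₃.eq,
    Complex.star_def, Complex.conj_I, neg_smul, sub_eq_add_neg]

theorem lower_mul_raise :
    (B - Complex.I • C) * (B + Complex.I • C) = ((s * (s + 1) : ℝ) : ℂ) • 1 - A ^ 2 - A := by
  simp only [mul_add, sub_mul, mul_smul_comm, smul_mul_assoc, ← sq]
  linear_combination (norm := skip) Complex.I • h.comm₂₃ + h.casimir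
  match_scalars <;> grind [Complex.I_sq]

theorem raise_mul_lower :
    (B + Complex.I • C) * (B - Complex.I • C) = ((s * (s + 1) : ℝ) : ℂ) • 1 - A ^ 2 + A := by
  simp only [add_mul, mul_sub, mul_smul_comm, smul_mul_assoc, ← sq]
  linear_combination (norm := skip) h.casimir - Complex.I • h.comm₂₃
  match_scalars <;> grind [Complex.I_sq]

variable {v : n → ℂ} {μ : ℝ}

theorem mul_add_one_le (hv : v ≠ 0) (hAv : A *ᵥ v = (μ : ℂ) • v) : μ * (μ + 1) ≤ s * (s + 1) := by
  refine sub_nonneg.mp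
    (nonneg_of_conjTranspose_mul_self_mulVec_eq_smul (N := B + Complex.I • C) hv ?_)
  rw [h.conjTranspose_raise, h.lower_mul_raise, sub_eq_add_neg _ A, ← neg_one_smul ℂ A,
    smul_one_sub_sq_add_smul_mulVec hAv]
  push_cast
  ring_nf

theorem mul_sub_one_le (hv : v ≠ 0) (hAv : A *ᵥ v = (μ : ℂ) • v) : μ * (μ - 1) ≤ s * (s + 1) := by
  refine sub_nonneg.mp
    (nonneg_of_conjTranspose_mul_self_mulVec_eq_smul (N := (B + Complex.I • C)ᴴ) hv ?_)
  rw [conjTranspose_conjTranspose, h.conjTranspose_raise, h.raise_mul_lower]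
  convert smul_one_sub_sq_add_smul_mulVec hAv _ 1 using 1
  · rw [one_smul]
  · push_cast
    ring_nf

theorem abs_le_of_mulVec_eq_smul (hs : 0 ≤ s) (hv : v ≠ 0) (hAv : A *ᵥ v = (μ : ℂ) • v) :
    |μ| ≤ s := by
  have := h.mul_add_one_le hv hAv
  have := h.mul_sub_one_le hv hAv
  rw [abs_le]
  constructor <;> nlinarith

theorem eq_of_raise_mulVec_eq_zero (hs : 0 ≤ s) (hv : v ≠ 0) (hAv : A *ᵥ v = (μ : ℂ) • v)
    (hL : (B + Complex.I • C) *ᵥ v = 0) : μ = s := by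
  have hq := congrArg (· *ᵥ v) h.lower_mul_raise
  simp only [← mulVec_mulVec, hL, mulVec_zero] at hq
  rw [sub_eq_add_neg _ A, ← neg_one_smul ℂ A, smul_one_sub_sq_add_smul_mulVec hAv] at hq
  have hμ : s * (s + 1) - μ ^ 2 + -1 * μ = 0 := by
    exact_mod_cast (smul_eq_zero.mp hq.symm).resolve_right hv
  have := (abs_le.mp (h.abs_le_of_mulVec_eq_smul hs hv hAv)).1
  nlinarith

theorem mulVec_raise_mulVec (hAv : A *ᵥ v = (μ : ℂ) • v) :
    A *ᵥ ((B + Complex.I • C) *ᵥ v) = ((μ + 1 : ℝ) : ℂ) • ((B + Complex.I • C) *ᵥ v) := by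
  rw [mulVec_mulVec, h.mul_raise, ← mulVec_mulVec, add_mulVec A 1, hAv, one_mulVec, mulVec_add,
    mulVec_smul]
  push_cast
  module

theorem exists_eq_sub_natCast (hs : 0 ≤ s) (hv : v ≠ 0) (hAv : A *ᵥ v = (μ : ℂ) • v) :
    ∃ N : ℕ, μ = s - N := by
  suffices key : ∀ N : ℕ, ∀ (μ : ℝ) (v : n → ℂ), v ≠ 0 → A *ᵥ v = (μ : ℂ) • v → s < μ + N →
      ∃ M : ℕ, μ = s - M from
    key (⌈s - μ⌉₊ + 1) μ v hv hAv (by push_cast; linarith [Nat.le_ceil (s - μ)])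
  intro N
  induction N with
  | zero =>
    intro μ v hv hAv hμ
    have := (abs_le.mp (h.abs_le_of_mulVec_eq_smul hs hv hAv)).2
    push_cast at hμ
    linarith
  | succ N ih =>
    intro μ v hv hAv hμ
    by_cases hL : (B + Complex.I • C) *ᵥ v = 0
    · exact ⟨0, by simp [h.eq_of_raise_mulVec_eq_zero hs hv hAv hL]⟩
    · obtain ⟨M, hM⟩ := ih (μ + 1) _ hL (h.mulVec_raise_mulVec hAv) (by push_cast at hμ; linarith)
      exact ⟨M + 1, by push_cast; linarith⟩

theorem exp_two_pi_I_smul (hs : 0 ≤ s) :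
    exp ((2 * (π : ℂ) * Complex.I) • A) = Complex.exp (2 * π * Complex.I * s) • 1 := by
  have hA := h.isHermitian₁
  refine hA.exp_smul_eq_smul_one fun i => ?_
  obtain ⟨N, hN⟩ := h.exists_eq_sub_natCast hs (v := (hA.eigenvectorBasis i).ofLp)
    (by simpa using hA.eigenvectorBasis.orthonormal.ne_zero i)
    (by rw [hA.mulVec_eigenvectorBasis, Complex.coe_smul])
  have harg : 2 * (π : ℂ) * Complex.I * ((s - N : ℝ) : ℂ) =
      2 * π * Complex.I * s - N * (2 * π * Complex.I) := by
    push_cast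
    ring
  rw [hN, harg, Complex.exp_sub, Complex.exp_nat_mul_two_pi_mul_I, div_one]

theorem exp_smul_mul_eq_neg {c : ℂ} (hc : Complex.exp c = -1) :
    exp (c • A) * B = -(B * exp (c • A)) := by
  have hraise := exp_smul_mul_of_mul_eq_mul_add_smul_one (a := 1)
    (h.mul_raise.trans (by rw [one_smul])) c
  have hlower := exp_smul_mul_of_mul_eq_mul_add_smul_one (a := -1)
    (h.mul_lower.trans (by rw [neg_one_smul, ← sub_eq_add_neg])) c
  rw [mul_one, hc] at hraise
  rw [mul_neg_one, Complex.exp_neg, hc, inv_neg, inv_one] at hlower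
  simp only [mul_add, mul_sub, add_mul, sub_mul, mul_smul_comm, smul_mul_assoc] at hraise hlower
  linear_combination (norm := module) (2⁻¹ : ℂ) • (hraise + hlower)

theorem exp_pi_mul_exp_pi (hs : 0 ≤ s) :
    exp ((-(π : ℂ) * Complex.I) • A) * exp ((-(π : ℂ) * Complex.I) • B) =
      Complex.exp (2 * π * Complex.I * s) •
        (exp ((-(π : ℂ) * Complex.I) • B) * exp ((-(π : ℂ) * Complex.I) • A)) := by
  set c : ℂ := -(π : ℂ) * Complex.I
  have hc : Complex.exp c = -1 := by
    rw [show c = -(π * Complex.I) from neg_mul _ _, Complex.exp_neg, Complex.exp_pi_mul_I, inv_neg,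
      inv_one]
  have hsemi : SemiconjBy (exp (c • A)) (c • B) ((-c) • B) := by
    rw [SemiconjBy, mul_smul_comm, h.exp_smul_mul_eq_neg hc, smul_neg, neg_smul, neg_mul,
      smul_mul_assoc]
  have hsplit : (-c) • B = (2 * (π : ℂ) * Complex.I) • B + c • B := by
    rw [← add_smul]
    congr 1
    simp only [c]
    ring
  rw [(semiconjBy_exp hsemi).eq, hsplit,
    exp_add_of_commute _ _ (((Commute.refl B).smul_left _).smul_right _),
    h.rotate.exp_two_pi_I_smul hs, smul_mul_assoc, one_mul, smul_mul_assoc]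

end IsSpinTriple

/-- For half-odd-integer spin `S = (2k+1)/2`, the standard spin operators
`S1, S2, S3` on `ℂ^(2S+1)` (Hermitian, su(2) commutation relations, Casimir `S(S+1)`)
satisfy `Vj Vk = - Vk Vj` for `j ≠ k`, where `Vj = exp (-iπ Sj)`. -/
theorem pi_rotations_anticommute (k : ℕ)
    (S1 S2 S3 : Matrix (Fin (2*k+2)) (Fin (2*k+2)) ℂ)
    (h1 : S1.IsHermitian) (h2 : S2.IsHermitian) (h3 : S3.IsHermitian)
    (hc1 : S1 * S2 - S2 * S1 = Complex.I • S3)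
    (hc2 : S2 * S3 - S3 * S2 = Complex.I • S1)
    (hc3 : S3 * S1 - S1 * S3 = Complex.I • S2)
    (hcas : S1 ^ 2 + S2 ^ 2 + S3 ^ 2
      = (((2*(k:ℂ)+1)/2) * ((2*(k:ℂ)+1)/2 + 1)) • (1 : Matrix (Fin (2*k+2)) (Fin (2*k+2)) ℂ)) :
    ∀ T U : Matrix (Fin (2*k+2)) (Fin (2*k+2)) ℂ,
      ((T = S1 ∧ U = S2) ∨ (T = S2 ∧ U = S3) ∨ (T = S3 ∧ U = S1)) →
      (NormedSpace.exp ((-(Real.pi : ℂ) * Complex.I) • T)) *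
        (NormedSpace.exp ((-(Real.pi : ℂ) * Complex.I) • U)) =
      -((NormedSpace.exp ((-(Real.pi : ℂ) * Complex.I) • U)) *
        (NormedSpace.exp ((-(Real.pi : ℂ) * Complex.I) • T))) := by
  have hS : IsSpinTriple ((2 * k + 1) / 2) S1 S2 S3 :=
    ⟨h1, h2, h3, hc1, hc2, hc3, by rw [hcas]; push_cast; ring_nf⟩
  have hs : (0 : ℝ) ≤ (2 * k + 1) / 2 := by positivity
  have hsign : Complex.exp (2 * π * Complex.I * ((2 * k + 1) / 2 : ℝ)) = -1 := by
    have harg : 2 * π * Complex.I * ((2 * k + 1) / 2 : ℝ) = (2 * k + 1 : ℕ) * (π * Complex.I) := by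
      push_cast
      ring
    rw [harg, Complex.exp_nat_mul, Complex.exp_pi_mul_I, (odd_two_mul_add_one k).neg_one_pow]
  rintro T U (⟨rfl, rfl⟩ | ⟨rfl, rfl⟩ | ⟨rfl, rfl⟩)
  · rw [hS.exp_pi_mul_exp_pi hs, hsign, neg_one_smul]
  · rw [hS.rotate.exp_pi_mul_exp_pi hs, hsign, neg_one_smul]
  · rw [hS.rotate.rotate.exp_pi_mul_exp_pi hs, hsign, neg_one_smul]
end

section
/- Let S be a half-odd-integer and V_j = exp(-iπ S_j) for j = 1,2,3. Then V_1 V_2 V_3 = -1. -/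
/-!
Write `V_j = exp (-iπ S_j)` and `U = exp (-iπ S₂ / 2)`. Since the eigenvalues of `S₃` lie in
`ℤ + 1/2` (highest-weight argument with the ladder operator `S₁ + iS₂` and the Casimir),
`V₃² = exp (-2πi S₃) = -1`. The quarter turn `U` carries `S₃` to `S₁`, so `V₁ U = U V₃`;
`V₂ = U²`; and `V₃` reverses `S₂`, so `V₃ U = U⁻¹ V₃`. Hence
`V₁ V₂ V₃ = U V₃ U V₃ = U U⁻¹ V₃² = -1`.
-/

open Complex

section Commutators

variable {R : Type*} [Ring R] [Algebra ℂ R] {X Y Z : R}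

theorem smul_mul_sub_mul_smul (c : ℂ) (A B : R) :
    (c • A) * B - B * (c • A) = c • (A * B - B * A) := by
  rw [smul_mul_assoc, mul_smul_comm, smul_sub]

theorem commutator_add_I_smul (hYZ : Y * Z - Z * Y = I • X) (hZX : Z * X - X * Z = I • Y) :
    Z * (X + I • Y) - (X + I • Y) * Z = X + I • Y := by
  have hI : I • I • X = -X := by rw [smul_smul, I_mul_I, neg_one_smul]
  simp only [mul_add, add_mul, mul_smul_comm, smul_mul_assoc]
  linear_combination (norm := module) hZX - I • hYZ - hI

theorem commutator_sub_I_smul (hYZ : Y * Z - Z * Y = I • X) (hZX : Z * X - X * Z = I • Y) :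
    Z * (X - I • Y) - (X - I • Y) * Z = -(X - I • Y) := by
  have hI : I • I • X = -X := by rw [smul_smul, I_mul_I, neg_one_smul]
  simp only [mul_sub, sub_mul, mul_smul_comm, smul_mul_assoc]
  linear_combination (norm := module) hZX + I • hYZ + hI

theorem sub_I_smul_mul_add_I_smul (hXY : X * Y - Y * X = I • Z) {C : ℂ}
    (hcas : X ^ 2 + Y ^ 2 + Z ^ 2 = C • 1) :
    (X - I • Y) * (X + I • Y) = C • 1 - Z * Z - Z := by
  have hI : I • I • (Y * Y) = -(Y * Y) := by rw [smul_smul, I_mul_I, neg_one_smul]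
  have hXY' : I • (X * Y - Y * X) = -Z := by rw [hXY, smul_smul, I_mul_I, neg_one_smul]
  simp only [sq, mul_add, sub_mul, mul_smul_comm, smul_mul_assoc] at hcas ⊢
  linear_combination (norm := module) hcas + hXY' - hI

end Commutators

namespace Module.End

variable {K V : Type*} [Field K] [AddCommGroup V] [Module K V] {f g : End K V}

theorem pow_apply_mem_eigenspace_add_nat (h : f * g - g * f = g) {μ : K} {v : V}
    (hv : v ∈ f.eigenspace μ) (n : ℕ) : (g ^ n) v ∈ f.eigenspace (μ + n) := by
  induction n with
  | zero => simpa using hv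
  | succ n ih =>
    rw [mem_eigenspace_iff] at ih ⊢
    have hfg : f (g ((g ^ n) v)) = g (f ((g ^ n) v)) + g ((g ^ n) v) := by
      simpa [add_comm] using congr($(sub_eq_iff_eq_add.mp h) ((g ^ n) v))
    rw [pow_succ', mul_apply, hfg, ih, map_smul]
    push_cast
    module

/-- `g` shifts eigenvalues of `f` by one and `f` has only finitely many eigenvalues, so
iterating `g` on an eigenvector reaches one that `g` kills. -/
theorem exists_hasEigenvector_add_nat_of_commutator_eq [CharZero K] [FiniteDimensional K V]
    (h : f * g - g * f = g) {μ : K} (hμ : f.HasEigenvalue μ) :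
    ∃ N : ℕ, ∃ w, f.HasEigenvector (μ + N) w ∧ g w = 0 := by
  obtain ⟨v, hv⟩ := hμ.exists_hasEigenvector
  have hvanish : ∃ n, (g ^ n) v = 0 := by
    by_contra! hne
    have hsub : Set.range (fun n : ℕ => μ + n) ⊆ spectrum K f := by
      rintro _ ⟨n, rfl⟩
      exact (hasEigenvalue_of_hasEigenvector
        ⟨pow_apply_mem_eigenspace_add_nat h hv.1 n, hne n⟩).mem_spectrum
    exact (Set.infinite_range_of_injective fun a b hab => by simpa using hab).mono hsub
      (finite_spectrum f)
  classical
  obtain ⟨N, hN⟩ : ∃ N, Nat.find hvanish = N + 1 :=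
    Nat.exists_eq_succ_of_ne_zero fun h0 => hv.2 (by simpa [h0] using Nat.find_spec hvanish)
  refine ⟨N, (g ^ N) v, ⟨pow_apply_mem_eigenspace_add_nat h hv.1 N,
    Nat.find_min hvanish (by omega)⟩, ?_⟩
  rw [← mul_apply, ← pow_succ', ← hN]
  exact Nat.find_spec hvanish

theorem exists_nat_mul_add_one_eq_of_commutator_eq [CharZero K] [FiniteDimensional K V]
    {g' : End K V} {C : K} (h : f * g - g * f = g) (hcas : g' * g = C • 1 - f * f - f)
    {μ : K} (hμ : f.HasEigenvalue μ) : ∃ N : ℕ, (μ + N) * (μ + N + 1) = C := by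
  obtain ⟨N, w, hw, hgw⟩ := exists_hasEigenvector_add_nat_of_commutator_eq h hμ
  have hw0 : (C - (μ + N) * (μ + N + 1)) • w = 0 := by
    have := congr($hcas w)
    simp only [mul_apply, hgw, map_zero, LinearMap.sub_apply, LinearMap.smul_apply, one_apply,
      hw.apply_eq_smul, map_smul, smul_smul] at this
    rw [this]
    module
  exact ⟨N, (sub_eq_zero.mp ((smul_eq_zero.mp hw0).resolve_right hw.2)).symm⟩

end Module.End

namespace Matrix

variable {m : Type*} [Fintype m] [DecidableEq m]

theorem semiconjBy_exp_right {T A B : Matrix m m ℂ} (h : SemiconjBy T A B) :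
    SemiconjBy T (NormedSpace.exp A) (NormedSpace.exp B) :=
  open scoped Norms.Operator in h.exp_right

theorem exp_smul_one_s2 (c : ℂ) : NormedSpace.exp (c • (1 : Matrix m m ℂ)) = Complex.exp c • 1 := by
  rw [smul_one_eq_diagonal, exp_diagonal, smul_one_eq_diagonal, exp_eq_exp_ℂ, Pi.exp_def]

theorem exp_mul_of_commutator_eq_smul {A B : Matrix m m ℂ} {c : ℂ}
    (h : A * B - B * A = c • B) :
    NormedSpace.exp A * B = Complex.exp c • (B * NormedSpace.exp A) := by
  have hsemi : SemiconjBy B (A + c • 1) A := by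
    rw [SemiconjBy, mul_add, mul_smul_comm, mul_one, ← h]
    abel
  rw [← (semiconjBy_exp_right hsemi).eq,
    exp_add_of_commute _ _ ((Commute.one_right A).smul_right c), exp_smul_one_s2,
    mul_smul_comm, mul_one, mul_smul_comm]

theorem exp_smul_mul_exp_smul (a b : ℂ) (A : Matrix m m ℂ) :
    NormedSpace.exp (a • A) * NormedSpace.exp (b • A) = NormedSpace.exp ((a + b) • A) := by
  rw [← exp_add_of_commute _ _ (((Commute.refl A).smul_left a).smul_right b), add_smul]

/-- `X ± iY` are eigenvectors of `ad Z` with eigenvalues `±1`, so `exp (-iφZ)` moves them past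
itself at the cost of the factors `e^{∓iφ}`. -/
theorem exp_rotation_mul {X Y Z : Matrix m m ℂ} (hYZ : Y * Z - Z * Y = I • X)
    (hZX : Z * X - X * Z = I • Y) (φ : ℂ) :
    NormedSpace.exp ((-φ * I) • Z) * X
      = (cos φ • X + sin φ • Y) * NormedSpace.exp ((-φ * I) • Z) := by
  have hp := exp_mul_of_commutator_eq_smul (A := (-φ * I) • Z) (B := X + I • Y) (c := -φ * I)
    (by rw [smul_mul_sub_mul_smul, commutator_add_I_smul hYZ hZX])
  have hm := exp_mul_of_commutator_eq_smul (A := (-φ * I) • Z) (B := X - I • Y) (c := φ * I)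
    (by rw [smul_mul_sub_mul_smul, commutator_sub_I_smul hYZ hZX, smul_neg, ← neg_smul, neg_mul,
      neg_neg])
  rw [Complex.cos, Complex.sin]
  simp only [mul_add, add_mul, mul_sub, sub_mul, mul_smul_comm, smul_mul_assoc] at hp hm ⊢
  linear_combination (norm := module) (1 / 2 : ℂ) • (hp + hm)

theorem exp_quarter_rotation_mul {X Y Z : Matrix m m ℂ} (hYZ : Y * Z - Z * Y = I • X)
    (hZX : Z * X - X * Z = I • Y) :
    NormedSpace.exp ((-(Real.pi / 2 : ℂ) * I) • Z) * X
      = Y * NormedSpace.exp ((-(Real.pi / 2 : ℂ) * I) • Z) := by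
  rw [exp_rotation_mul hYZ hZX, cos_pi_div_two, sin_pi_div_two, zero_smul, zero_add, one_smul]

theorem exp_half_rotation_mul {X Y Z : Matrix m m ℂ} (hYZ : Y * Z - Z * Y = I • X)
    (hZX : Z * X - X * Z = I • Y) :
    NormedSpace.exp ((-(Real.pi : ℂ) * I) • Z) * X
      = -X * NormedSpace.exp ((-(Real.pi : ℂ) * I) • Z) := by
  rw [exp_rotation_mul hYZ hZX, cos_pi, sin_pi, zero_smul, add_zero, neg_one_smul]

namespace IsHermitian

variable {A : Matrix m m ℂ}

theorem hasEigenvalue_toLinAlgEquiv'_eigenvalues (hA : A.IsHermitian) (i : m) :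
    Module.End.HasEigenvalue (toLinAlgEquiv' A) (hA.eigenvalues i : ℂ) := by
  refine Module.End.hasEigenvalue_of_hasEigenvector (x := ⇑(hA.eigenvectorBasis i)) ⟨?_, ?_⟩
  · rw [Module.End.mem_eigenspace_iff, toLinAlgEquiv'_apply, hA.mulVec_eigenvectorBasis]
    exact (coe_smul _ _).symm
  · simpa using hA.eigenvectorBasis.orthonormal.ne_zero i

theorem exp_smul_eq_smul_one_s2 (hA : A.IsHermitian) {c z : ℂ}
    (h : ∀ i, Complex.exp (c * hA.eigenvalues i) = z) : NormedSpace.exp (c • A) = z • 1 := by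
  let U := Unitary.toUnits hA.eigenvectorUnitary
  have hdiag : c • A = U * diagonal (fun i => c * hA.eigenvalues i) * U⁻¹ := by
    have hcD : diagonal (fun i => c * hA.eigenvalues i)
        = c • diagonal (RCLike.ofReal ∘ hA.eigenvalues) := by
      rw [← diagonal_smul]
      rfl
    conv_lhs => rw [hA.spectral_theorem]
    rw [hcD, Matrix.mul_smul, Matrix.smul_mul]
    rfl
  rw [hdiag, exp_units_conj, exp_diagonal, Pi.exp_def]
  simp only [← exp_eq_exp_ℂ, h, ← smul_one_eq_diagonal, Matrix.mul_smul, Matrix.smul_mul,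
    Matrix.mul_one, Units.mul_inv]

/-- Climbing from an eigenvalue with `X + iY` ends at a highest weight `λ` differing from it by an
integer, and the Casimir forces `λ (λ + 1) = s (s + 1)`, i.e. `λ = s` or `λ = -s - 1`. -/
theorem eigenvalues_mem_halfOdd_of_spin {X Y Z : Matrix m m ℂ} (hZ : Z.IsHermitian)
    (hXY : X * Y - Y * X = I • Z) (hYZ : Y * Z - Z * Y = I • X) (hZX : Z * X - X * Z = I • Y)
    {s : ℂ} (hcas : X ^ 2 + Y ^ 2 + Z ^ 2 = (s * (s + 1)) • 1) (hs : ∃ j : ℤ, s = j + 1 / 2)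
    (i : m) : ∃ j : ℤ, (hZ.eigenvalues i : ℂ) = j + 1 / 2 := by
  obtain ⟨N, hN⟩ := Module.End.exists_nat_mul_add_one_eq_of_commutator_eq
    (f := toLinAlgEquiv' Z) (g := toLinAlgEquiv' (X + I • Y)) (g' := toLinAlgEquiv' (X - I • Y))
    (by simpa only [map_sub, map_mul] using
      congr(toLinAlgEquiv' $(commutator_add_I_smul hYZ hZX)))
    (by simpa only [map_sub, map_mul, map_smul, map_one] using
      congr(toLinAlgEquiv' $(sub_I_smul_mul_add_I_smul hXY hcas)))
    (hZ.hasEigenvalue_toLinAlgEquiv'_eigenvalues i)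
  obtain ⟨j, rfl⟩ := hs
  have hroots : ((hZ.eigenvalues i : ℂ) + N - (j + 1 / 2))
      * ((hZ.eigenvalues i : ℂ) + N + (j + 1 / 2) + 1) = 0 := by
    linear_combination hN
  rcases mul_eq_zero.mp hroots with h | h
  · exact ⟨j - N, by push_cast; linear_combination h⟩
  · exact ⟨-j - N - 2, by push_cast; linear_combination h⟩

theorem exp_two_pi_rotation_eq_neg_one {X Y Z : Matrix m m ℂ} (hZ : Z.IsHermitian)
    (hXY : X * Y - Y * X = I • Z) (hYZ : Y * Z - Z * Y = I • X) (hZX : Z * X - X * Z = I • Y)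
    {s : ℂ} (hcas : X ^ 2 + Y ^ 2 + Z ^ 2 = (s * (s + 1)) • 1) (hs : ∃ j : ℤ, s = j + 1 / 2) :
    NormedSpace.exp ((-(2 * Real.pi : ℂ) * I) • Z) = -1 := by
  rw [hZ.exp_smul_eq_smul_one_s2 (z := -1) fun i => ?_, neg_one_smul]
  obtain ⟨j, hj⟩ := hZ.eigenvalues_mem_halfOdd_of_spin hXY hYZ hZX hcas hs i
  calc Complex.exp (-(2 * Real.pi : ℂ) * I * (hZ.eigenvalues i : ℂ))
      = Complex.exp ((-j : ℤ) * (2 * Real.pi * I)) * Complex.exp (-(Real.pi * I)) := by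
        rw [← Complex.exp_add, hj]
        push_cast
        ring_nf
    _ = -1 := by rw [exp_int_mul_two_pi_mul_I, Complex.exp_neg, exp_pi_mul_I, one_mul, inv_neg,
        inv_one]

end IsHermitian

end Matrix

theorem pi_rotations_product_eq_neg_one_general (k : ℕ)
    (S1 S2 S3 : Matrix (Fin (2*k+2)) (Fin (2*k+2)) ℂ)
    (h3 : S3.IsHermitian)
    (hc1 : S1 * S2 - S2 * S1 = Complex.I • S3)
    (hc2 : S2 * S3 - S3 * S2 = Complex.I • S1)
    (hc3 : S3 * S1 - S1 * S3 = Complex.I • S2)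
    (hcas : S1 ^ 2 + S2 ^ 2 + S3 ^ 2
      = (((2*(k:ℂ)+1)/2) * ((2*(k:ℂ)+1)/2 + 1)) • (1 : Matrix (Fin (2*k+2)) (Fin (2*k+2)) ℂ)) :
    (NormedSpace.exp ((-(Real.pi : ℂ) * Complex.I) • S1)) *
      (NormedSpace.exp ((-(Real.pi : ℂ) * Complex.I) • S2)) *
      (NormedSpace.exp ((-(Real.pi : ℂ) * Complex.I) • S3)) = -1 := by
  set V1 := NormedSpace.exp ((-(Real.pi : ℂ) * I) • S1)
  set V3 := NormedSpace.exp ((-(Real.pi : ℂ) * I) • S3)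
  set U := NormedSpace.exp ((-(Real.pi / 2 : ℂ) * I) • S2)
  set U' := NormedSpace.exp ((Real.pi / 2 * I : ℂ) • S2)
  have hV2 : NormedSpace.exp ((-(Real.pi : ℂ) * I) • S2) = U * U := by
    rw [Matrix.exp_smul_mul_exp_smul]
    ring_nf
  have hUU' : U * U' = 1 := by
    rw [Matrix.exp_smul_mul_exp_smul, neg_mul, neg_add_cancel, zero_smul, NormedSpace.exp_zero]
  have hV1U : V1 * U = U * V3 := by
    refine (Matrix.semiconjBy_exp_right ?_).eq.symm
    rw [SemiconjBy, mul_smul_comm, Matrix.exp_quarter_rotation_mul hc1 hc2, smul_mul_assoc]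
  have hV3U : V3 * U = U' * V3 := by
    have hV3S2 : V3 * S2 = -S2 * V3 := Matrix.exp_half_rotation_mul (Y := -S1)
      (by rw [← hc3]; noncomm_ring) (by rw [smul_neg, ← hc2, neg_sub])
    refine (Matrix.semiconjBy_exp_right ?_).eq
    rw [SemiconjBy, mul_smul_comm, hV3S2, neg_mul S2, smul_mul_assoc]
    module
  have hV3sq : V3 * V3 = -1 := by
    rw [Matrix.exp_smul_mul_exp_smul, ← add_mul, ← neg_add, ← two_mul]
    exact h3.exp_two_pi_rotation_eq_neg_one hc1 hc2 hc3 hcas ⟨k, by push_cast; ring⟩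
  calc V1 * NormedSpace.exp ((-(Real.pi : ℂ) * I) • S2) * V3
      = U * V3 * U * V3 := by rw [hV2, ← mul_assoc, hV1U]
    _ = U * U' * (V3 * V3) := by rw [mul_assoc U, hV3U]; noncomm_ring
    _ = -1 := by rw [hUU', hV3sq, one_mul]

/-- For half-odd-integer spin `S = (2k+1)/2`, the standard spin operators
`S1, S2, S3` on `ℂ^(2S+1)` (Hermitian, su(2) commutation relations, Casimir `S(S+1)`)
satisfy `V1 V2 V3 = -1`, where `Vj = exp (-iπ Sj)`. -/
theorem pi_rotations_product_eq_neg_one (k : ℕ)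
    (S1 S2 S3 : Matrix (Fin (2*k+2)) (Fin (2*k+2)) ℂ)
    (h1 : S1.IsHermitian) (h2 : S2.IsHermitian) (h3 : S3.IsHermitian)
    (hc1 : S1 * S2 - S2 * S1 = Complex.I • S3)
    (hc2 : S2 * S3 - S3 * S2 = Complex.I • S1)
    (hc3 : S3 * S1 - S1 * S3 = Complex.I • S2)
    (hcas : S1 ^ 2 + S2 ^ 2 + S3 ^ 2
      = (((2*(k:ℂ)+1)/2) * ((2*(k:ℂ)+1)/2 + 1)) • (1 : Matrix (Fin (2*k+2)) (Fin (2*k+2)) ℂ)) :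
    (NormedSpace.exp ((-(Real.pi : ℂ) * Complex.I) • S1)) *
      (NormedSpace.exp ((-(Real.pi : ℂ) * Complex.I) • S2)) *
      (NormedSpace.exp ((-(Real.pi : ℂ) * Complex.I) • S3)) = -1 :=
  pi_rotations_product_eq_neg_one_general k S1 S2 S3 h3 hc1 hc2 hc3 hcas
end

section
/- Let R_1, R_2, R_3 be automorphisms of a C*-algebra with R_j² = id and R_1∘R_2∘R_3 = id, and let V_j ∈ M_n(C) be unitaries with V_j² = -1 and V_1V_2V_3 = -1. Suppose a nonzero family (s_μ) of elements satisfies, for each j, s_μ = c_j Σ_ν ⟨ψ_ν, V_j*ψ_μ⟩ R_j(s_ν) with unimodular constants c_j and an orthonormal basis (ψ_μ) of C^n. Then c_1c_2c_3 = -1 and simultaneously c_j = ±i for each j; these conditions are contradictory, so no such nonzero family exists. -/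
/-- Let `R_1, R_2, R_3` be *-automorphisms of a C*-algebra with
`R_j² = id`, `R_1 ∘ R_2 ∘ R_3 = id`, and `V_j ∈ M_n(ℂ)` unitaries with `V_j² = -1`,
`V_1 V_2 V_3 = -1`.  If a nonzero family `(s_μ)` satisfies, for each `j`,
`s_μ = c_j • Σ_ν ⟨ψ_ν, V_j* ψ_μ⟩ R_j(s_ν)` with unimodular `c_j` (in the orthonormal
basis in which the `V_j` are written, `⟨ψ_ν, V_j* ψ_μ⟩ = star (V_j μ ν)`), then one
derives both `c_1 c_2 c_3 = -1` and `c_j = ±i`, which is contradictory: no such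
nonzero family exists. -/
theorem Z2Z2_LSM_core
    (n : ℕ)
    (A : Type*) [NormedRing A] [NormedAlgebra ℂ A] [StarRing A] [CStarRing A]
    [CompleteSpace A] [StarModule ℂ A]
    (R : Fin 3 → (A ≃⋆ₐ[ℂ] A))
    (hR2 : ∀ j a, R j (R j a) = a)
    (hR123 : ∀ a, R 0 (R 1 (R 2 a)) = a)
    (V : Fin 3 → Matrix (Fin n) (Fin n) ℂ)
    (hVunit : ∀ j, V j ∈ Matrix.unitaryGroup (Fin n) ℂ)
    (hV2 : ∀ j, (V j) ^ 2 = -1)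
    (hV123 : V 0 * V 1 * V 2 = -1)
    (c : Fin 3 → ℂ) (hc : ∀ j, ‖c j‖ = 1)
    (s : Fin n → A) (hs : ∃ μ, s μ ≠ 0)
    (hcov : ∀ j μ, s μ = c j • ∑ ν, (star (V j μ ν)) • (R j) (s ν)) :
    False := by
  obtain ⟨μ₀, hμ₀⟩ := hs
  -- collapsing step: if `s μ₀ = d • (-s μ₀)` then `d = -1`
  have collapse : ∀ d : ℂ, s μ₀ = d • (-s μ₀) → d = -1 := by
    intro d h
    by_contra hne
    have hz : (1 + d) ≠ 0 := fun h0 => hne (by linear_combination h0)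
    apply hμ₀
    have h' : (1 + d) • s μ₀ = 0 := by
      rw [add_smul, one_smul]
      nth_rewrite 1 [h]
      simp
    have := congrArg (fun x => (1 + d)⁻¹ • x) h'
    simpa [smul_smul, inv_mul_cancel₀ hz] using this
  -- composition of two covariance relations
  have key : ∀ (j k : Fin 3) (μ : Fin n),
      s μ = (c j * c k) • ∑ ρ, (star ((V j * V k) μ ρ)) • (R j) ((R k) (s ρ)) := by
    intro j k μ
    calc s μ = c j • ∑ ν, star (V j μ ν) • (R j) (s ν) := hcov j μ
    _ = c j • ∑ ν, star (V j μ ν) •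
          (R j) (c k • ∑ ρ, star (V k ν ρ) • (R k) (s ρ)) := by
        congr 1
        exact Finset.sum_congr rfl fun ν _ => by rw [← hcov k ν]
    _ = ∑ ν, ∑ ρ, (c j * c k * (star (V j μ ν) * star (V k ν ρ))) •
          (R j) ((R k) (s ρ)) := by
        simp only [map_smul, map_sum, Finset.smul_sum, smul_smul]
        exact Finset.sum_congr rfl fun ν _ => Finset.sum_congr rfl fun ρ _ => by ring_nf
    _ = (c j * c k) • ∑ ρ, (star ((V j * V k) μ ρ)) • (R j) ((R k) (s ρ)) := by
        rw [Finset.sum_comm]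
        simp only [Matrix.mul_apply, star_sum, star_mul', Finset.sum_smul,
          Finset.smul_sum, smul_smul]
  -- squares: c j * c j = -1
  have hsq : ∀ j, c j * c j = -1 := by
    intro j
    have h := key j j μ₀
    rw [show V j * V j = -1 from by rw [← pow_two]; exact hV2 j] at h
    simp only [Matrix.neg_apply, Matrix.one_apply, hR2, star_neg, star_one,
      star_zero, ite_smul, neg_smul, one_smul, zero_smul, Finset.sum_ite_eq,
      Finset.mem_univ, if_true] at h
    exact collapse _ (by simpa [smul_neg] using h)
  -- product: c 0 * c 1 * c 2 = -1
  have hprod : c 0 * (c 1 * c 2) = -1 := by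
    have h := hcov 0 μ₀
    have h' : s μ₀ = (c 0 * (c 1 * c 2)) •
        ∑ ρ, (star ((V 0 * (V 1 * V 2)) μ₀ ρ)) • (R 0) ((R 1) ((R 2) (s ρ))) := by
      calc s μ₀ = c 0 • ∑ ν, star (V 0 μ₀ ν) • (R 0) (s ν) := hcov 0 μ₀
      _ = c 0 • ∑ ν, star (V 0 μ₀ ν) •
            (R 0) ((c 1 * c 2) • ∑ ρ, (star ((V 1 * V 2) ν ρ)) • (R 1) ((R 2) (s ρ))) := by
          congr 1
          exact Finset.sum_congr rfl fun ν _ => by rw [← key 1 2 ν]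
      _ = ∑ ν, ∑ ρ, (c 0 * (c 1 * c 2) * (star (V 0 μ₀ ν) * star ((V 1 * V 2) ν ρ))) •
            (R 0) ((R 1) ((R 2) (s ρ))) := by
          simp only [map_smul, map_sum, Finset.smul_sum, smul_smul]
          exact Finset.sum_congr rfl fun ν _ => Finset.sum_congr rfl fun ρ _ => by ring_nf
      _ = (c 0 * (c 1 * c 2)) •
            ∑ ρ, (star ((V 0 * (V 1 * V 2)) μ₀ ρ)) • (R 0) ((R 1) ((R 2) (s ρ))) := by
          rw [Finset.sum_comm]
          simp only [Matrix.mul_apply, star_sum, star_mul', Finset.sum_smul,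
            Finset.smul_sum, smul_smul]
    rw [show V 0 * (V 1 * V 2) = -1 from by rw [← mul_assoc]; exact hV123] at h'
    simp only [Matrix.neg_apply, Matrix.one_apply, hR123, star_neg, star_one,
      star_zero, ite_smul, neg_smul, one_smul, zero_smul, Finset.sum_ite_eq,
      Finset.mem_univ, if_true] at h'
    exact collapse _ (by simpa [smul_neg] using h')
  have h1 : (c 0 * (c 1 * c 2)) ^ 2 = 1 := by rw [hprod]; ring
  have h2 : (c 0 * (c 1 * c 2)) ^ 2 = -1 := by
    have : (c 0 * (c 1 * c 2)) ^ 2 = (c 0 * c 0) * ((c 1 * c 1) * (c 2 * c 2)) := by ring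
    rw [this, hsq 0, hsq 1, hsq 2]; norm_num
  have : (1 : ℂ) = -1 := h1.symm.trans h2
  norm_num at this
end

section
/- Suppose (s_μ)_{μ∈S} (S = {-S,...,S}, 2S odd) are elements of a von Neumann algebra M with s_μ*s_ν = δ_{μν}1, and Ξ̂ is an antilinear *-automorphism of M with Ξ̂² = id. Define t_μ = (-1)^{S+μ} Ξ̂(s_{-μ}). If there exists a unimodular c ∈ C with t_μ = c·s_μ for all μ, then s_μ = 0 for all μ. -/
/-!
Write `x = s_μ`, `y = s_{-μ}`. The two instances `c • x = ± Ξ y` and `c • y = ± Ξ x` of the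
hypothesis, combined through `Ξ² = id` and the antilinearity of `Ξ`, give `|c|² • x = (-1)^{2S} • x`.
Since `|c| = 1` and `2S` is odd, `x = -x`, so `x = 0`.
-/

open ComplexConjugate

theorem eq_zero_of_smul_eq_of_antilinear_involutive {𝕜 M : Type*} [RCLike 𝕜]
    [AddCommGroup M] [Module 𝕜 M] {Ξ : M → M}
    (hsmul : ∀ (α : 𝕜) a, Ξ (α • a) = conj α • Ξ a) (hinv : ∀ a, Ξ (Ξ a) = a)
    {x y : M} {a b c : 𝕜} (hc : ‖c‖ = 1)
    (hx : a • Ξ y = c • x) (hy : b • Ξ x = c • y) (hab : a * conj b = -1) :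
    x = 0 := by
  have hcc : conj c * c = 1 := by simp [RCLike.conj_mul, hc]
  have hy' : conj b • x = conj c • Ξ y := by
    simpa only [hsmul, hinv] using congrArg Ξ hy
  have hneg : -x = x := calc
    -x = (a * conj b) • x := by rw [hab, neg_one_smul]
    _ = (conj c * c) • x := by rw [mul_smul, hy', smul_comm, hx, smul_smul]
    _ = x := by rw [hcc, one_smul]
  have htwo : (2 : 𝕜) • x = 0 := by
    rw [two_smul]; nth_rewrite 1 [← hneg]; exact neg_add_cancel x
  exact (smul_eq_zero.mp htwo).resolve_left two_ne_zero

theorem Fin.neg_one_pow_mul_neg_one_pow_rev {R : Type*} [Monoid R] [HasDistribNeg R] {n : ℕ}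
    (i : Fin (n + 1)) : (-1 : R) ^ (i : ℕ) * (-1) ^ (i.rev : ℕ) = (-1) ^ n := by
  rw [← pow_add, Fin.val_rev]
  congr 1
  omega

-- `μ = i - S` with `S = k + 1/2`, so `-μ` is `Fin.rev i` and `(-1)^{S+μ} = (-1)^i`.
theorem time_reversal_LSM_core_general (k : ℕ)
    (M : Type*) [NormedRing M] [NormedAlgebra ℂ M]
    (Ξ : M → M)
    (hsmul : ∀ (α : ℂ) a, Ξ (α • a) = (starRingEnd ℂ α) • Ξ a)
    (hinv : ∀ a, Ξ (Ξ a) = a)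
    (s : Fin (2*k+2) → M)
    (c : ℂ) (hc : ‖c‖ = 1)
    (h : ∀ i : Fin (2*k+2), ((-1 : ℂ) ^ (i : ℕ)) • Ξ (s (Fin.rev i)) = c • s i) :
    ∀ i, s i = 0 := by
  intro i
  have hsign : (-1 : ℂ) ^ (i : ℕ) * conj ((-1) ^ (i.rev : ℕ)) = -1 := by
    rw [map_pow, map_neg, map_one, Fin.neg_one_pow_mul_neg_one_pow_rev (n := 2 * k + 1) i]
    exact Odd.neg_one_pow ⟨k, rfl⟩
  have hrev := h i.rev
  rw [Fin.rev_rev] at hrev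
  exact eq_zero_of_smul_eq_of_antilinear_involutive hsmul hinv hc (h i) hrev hsign

/-- Let `(s_μ)_{μ ∈ {-S,…,S}}` (with `2S = 2k+1` odd; here `μ = i - S`
is indexed by `i : Fin (2k+2)`, so `-μ ↔ Fin.rev i` and `(-1)^{S+μ} = (-1)^i`) be
elements of a von Neumann algebra (formalized as a C*-algebra `M`) with
`s_μ* s_ν = δ_{μν} 1`, and let `Ξ̂` be an antilinear *-automorphism of `M` with
`Ξ̂² = id`.  Set `t_μ = (-1)^{S+μ} Ξ̂(s_{-μ})`.  If `t_μ = c • s_μ` for all `μ` with a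
unimodular `c`, then `s_μ = 0` for all `μ`. -/
theorem time_reversal_LSM_core (k : ℕ)
    (M : Type*) [NormedRing M] [NormedAlgebra ℂ M] [StarRing M] [CStarRing M]
    [CompleteSpace M] [StarModule ℂ M]
    (Ξ : M → M)
    (hadd : ∀ a b, Ξ (a + b) = Ξ a + Ξ b)
    (hsmul : ∀ (α : ℂ) a, Ξ (α • a) = (starRingEnd ℂ α) • Ξ a)
    (hmul : ∀ a b, Ξ (a * b) = Ξ a * Ξ b)
    (hstar : ∀ a, Ξ (star a) = star (Ξ a))
    (hinv : ∀ a, Ξ (Ξ a) = a)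
    (s : Fin (2*k+2) → M)
    (hortho : ∀ i j, star (s i) * s j = if i = j then 1 else 0)
    (c : ℂ) (hc : ‖c‖ = 1)
    (h : ∀ i : Fin (2*k+2), ((-1 : ℂ) ^ (i : ℕ)) • Ξ (s (Fin.rev i)) = c • s i) :
    ∀ i, s i = 0 :=
  time_reversal_LSM_core_general k M Ξ hsmul hinv s c hc h
end
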